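/- arXiv:1304.5053 — 6 statements merged into one kernel-verified Lean document; each statement's English description precedes it below -/
import Mathlib

section
/- Let G be a solvable group and let φ : G → G be a locally inner endomorphism, i.e., a group homomorphism such that φ(x) is conjugate to x for every x ∈ G. Then φ is bijective, i.e., φ is an automorphism of G. (In other words, solvable groups are B-rigid.) -/
/-!
If `φ x` is always conjugate to `x`, then `φ x = 1` forces `x = 1`, so `φ` is injective.
For surjectivity one shows `φ(G) ⊔ G⁽ⁿ⁾ = G` by induction on `n`. Given `u ∈ G⁽ⁿ⁾`, write
`u = g φ(u) g⁻¹` with `g = φ(a) v`, `v ∈ G⁽ⁿ⁾`; since `φ(u) ∈ G⁽ⁿ⁾`, conjugating it by `v` only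
multiplies it by a commutator in `G⁽ⁿ⁺¹⁾`, so `u ∈ φ(G) ⊔ G⁽ⁿ⁺¹⁾`. For solvable `G` some
`G⁽ⁿ⁾` is trivial.
-/

open scoped commutatorElement

namespace MonoidHom

open Subgroup

variable {G : Type*} [Group G] {φ : G →* G}

theorem injective_of_forall_isConj (h : ∀ x, IsConj (φ x) x) : Function.Injective φ :=
  (injective_iff_map_eq_one φ).mpr fun x hx => isConj_one_right.mp (hx ▸ h x)

theorem range_sup_commutator_eq_top (h : ∀ x, IsConj (φ x) x) {N : Subgroup G} [N.Normal]
    (hN : N.map φ ≤ N) (hsup : φ.range ⊔ N = ⊤) : φ.range ⊔ ⁅N, N⁆ = ⊤ := by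
  refine eq_top_iff.mpr (hsup ▸ sup_le le_sup_left fun u hu => ?_)
  obtain ⟨g, hg⟩ := isConj_iff.mp (h u)
  obtain ⟨_, ⟨a, rfl⟩, v, hv, rfl⟩ :=
    mem_sup_of_normal_right.mp (hsup ▸ mem_top g : g ∈ φ.range ⊔ N)
  have hφa : φ a ∈ φ.range ⊔ ⁅N, N⁆ := mem_sup_left ⟨a, rfl⟩
  have hconj : v * φ u * v⁻¹ ∈ φ.range ⊔ ⁅N, N⁆ := by
    rw [show v * φ u * v⁻¹ = φ u * ⁅(φ u)⁻¹, v⁆ by group]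
    exact mul_mem (mem_sup_left ⟨u, rfl⟩)
      (mem_sup_right (commutator_mem_commutator (inv_mem (hN ⟨u, hu, rfl⟩)) hv))
  rw [← hg, show φ a * v * φ u * (φ a * v)⁻¹ = φ a * (v * φ u * v⁻¹) * (φ a)⁻¹ by group]
  exact mul_mem (mul_mem hφa hconj) (inv_mem hφa)

theorem range_sup_derivedSeries_eq_top (h : ∀ x, IsConj (φ x) x) (n : ℕ) :
    φ.range ⊔ derivedSeries G n = ⊤ := by
  induction n with
  | zero => simp
  | succ n ih =>
    rw [derivedSeries_succ]
    exact range_sup_commutator_eq_top h (map_derivedSeries_le_derivedSeries φ n) ih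

theorem surjective_of_forall_isConj [Group.IsSolvable G] (h : ∀ x, IsConj (φ x) x) :
    Function.Surjective φ := by
  obtain ⟨n, hn⟩ := Group.IsSolvable.solvable (G := G)
  have htop := range_sup_derivedSeries_eq_top h n
  rw [hn, sup_bot_eq] at htop
  exact range_eq_top.mp htop

end MonoidHom

/-- Solvable groups are B-rigid: every locally inner endomorphism of a solvable group
is bijective, i.e. an automorphism. -/
theorem solvable_group_B_rigid {G : Type*} [Group G] [Group.IsSolvable G] (φ : G →* G)
    (h : ∀ x : G, IsConj (φ x) x) : Function.Bijective φ :=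
  ⟨φ.injective_of_forall_isConj h, φ.surjective_of_forall_isConj h⟩
end

section
/- Let n be a natural number and let G = Sym(n) be the symmetric group on n letters. Then every locally inner automorphism of G is inner: if φ is an automorphism of G such that φ(σ) is conjugate to σ for every σ ∈ G, then there exists τ ∈ G with φ(σ) = τστ⁻¹ for all σ ∈ G. (Symmetric groups are A-rigid.) -/
/-!
A class-preserving automorphism `ψ` of `Sym(α)` sends transpositions to transpositions, and
two transpositions commute iff they are disjoint or equal. So the images of the star
transpositions `(a₀ k)` pairwise share exactly one point. They all pass through a single
point `a`: otherwise some image would be `(b c)`, with `(a b)`, `(a c)` the images of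
`(a₀ i)`, `(a₀ j)`, and then `(a₀ j)` would be the conjugate `(i k)` of `(a₀ i)` by `(a₀ k)`.
Writing `ψ (a₀ k) = (a, τ k)` defines a permutation `τ`, and `ψ` agrees with conjugation by
`τ` on the star, which generates `Sym(α)`.
-/

open Equiv

namespace Equiv.Perm

theorem exists_apply_ne_and_apply_ne_of_not_commute {α : Type*} {f g : Perm α}
    (h : ¬Commute f g) : ∃ x, f x ≠ x ∧ g x ≠ x := by
  by_contra! hfg
  exact h (Disjoint.commute fun x => or_iff_not_imp_left.mpr (hfg x))

variable {α : Type*} [DecidableEq α]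

theorem IsSwap.of_isConj {f g : Perm α} (hg : g.IsSwap) (h : IsConj f g) : f.IsSwap := by
  obtain ⟨x, y, hxy, rfl⟩ := hg
  obtain ⟨c, rfl⟩ := isConj_iff.mp h.symm
  exact ⟨c x, c y, c.injective.ne hxy, (swap_apply_apply c x y).symm⟩

theorem IsSwap.eq_swap_apply {f : Perm α} (hf : f.IsSwap) {a : α} (ha : f a ≠ a) :
    f = swap a (f a) := by
  obtain ⟨x, y, -, rfl⟩ := hf
  obtain ⟨-, rfl | rfl⟩ := swap_apply_ne_self_iff.mp ha
  · rw [swap_apply_left]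
  · rw [swap_apply_right, swap_comm]

theorem not_commute_swap_swap {a b c : α} (hab : a ≠ b) (hac : a ≠ c) (hbc : b ≠ c) :
    ¬Commute (swap a b) (swap a c) := fun h => hbc <| by
  simpa [swap_apply_of_ne_of_ne hac.symm hbc.symm, swap_apply_of_ne_of_ne hab.symm hbc]
    using (congrArg (· a) h.eq).symm

theorem apply_ne_of_not_commute_swap {f : Perm α} {a b : α} (ha : f a = a)
    (h : ¬Commute f (swap a b)) : f b ≠ b := by
  obtain ⟨x, hfx, hx⟩ := exists_apply_ne_and_apply_ne_of_not_commute h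
  obtain ⟨-, rfl | rfl⟩ := swap_apply_ne_self_iff.mp hx
  · exact absurd ha hfx
  · exact hfx

theorem IsSwap.eq_swap_of_not_commute {f : Perm α} (hf : f.IsSwap) {a b c : α} (ha : f a = a)
    (hb : ¬Commute f (swap a b)) (hc : ¬Commute f (swap a c)) (hbc : b ≠ c) :
    f = swap b c := by
  have hfc := apply_ne_of_not_commute_swap ha hc
  have hf_eq := hf.eq_swap_apply (apply_ne_of_not_commute_swap ha hb)
  suffices f b = c by rwa [this] at hf_eq
  by_contra hne
  rw [hf_eq] at hfc
  exact hfc (swap_apply_of_ne_of_ne hbc.symm (Ne.symm hne))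

theorem closure_range_swap [Finite α] (a₀ : α) : Subgroup.closure (Set.range (swap a₀)) = ⊤ := by
  rw [eq_top_iff, ← closure_isSwap, Subgroup.closure_le]
  rintro _ ⟨x, y, hxy, rfl⟩
  wlog hy : y ≠ a₀ generalizing x y
  · rw [swap_comm]
    exact this y x hxy.symm (by rintro rfl; exact hxy (not_ne_iff.mp hy).symm)
  have : swap x y = swap a₀ x * swap a₀ y * (swap a₀ x)⁻¹ := by
    rw [← swap_apply_apply, swap_apply_left, swap_apply_of_ne_of_ne hy hxy.symm]
  rw [this]
  exact mul_mem (mul_mem (Subgroup.subset_closure ⟨x, rfl⟩) (Subgroup.subset_closure ⟨y, rfl⟩))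
    (inv_mem (Subgroup.subset_closure ⟨x, rfl⟩))

section StarTranspositions

variable (ψ : Perm α ≃* Perm α)

theorem not_commute_map_swap_swap {a₀ i j : α} (hi : i ≠ a₀) (hj : j ≠ a₀) (hij : i ≠ j) :
    ¬Commute (ψ (swap a₀ i)) (ψ (swap a₀ j)) := fun h =>
  not_commute_swap_swap hi.symm hj.symm hij (by simpa using h.map ψ.symm)

theorem exists_forall_map_swap_apply_ne_of_ne (hψ : ∀ σ : Perm α, σ.IsSwap → (ψ σ).IsSwap)
    {a₀ i j : α} (hi : i ≠ a₀) (hj : j ≠ a₀) (hij : i ≠ j) :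
    ∃ a, ∀ k ≠ a₀, ψ (swap a₀ k) a ≠ a := by
  obtain ⟨a, hia, hja⟩ :=
    exists_apply_ne_and_apply_ne_of_not_commute (not_commute_map_swap_swap ψ hi hj hij)
  refine ⟨a, fun k hk hka => ?_⟩
  have hki : k ≠ i := by rintro rfl; exact hia hka
  have hkj : k ≠ j := by rintro rfl; exact hja hka
  set b := ψ (swap a₀ i) a
  set c := ψ (swap a₀ j) a
  have hψi : ψ (swap a₀ i) = swap a b := (hψ _ (swap_isSwap_iff.mpr hi.symm)).eq_swap_apply hia
  have hψj : ψ (swap a₀ j) = swap a c := (hψ _ (swap_isSwap_iff.mpr hj.symm)).eq_swap_apply hja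
  have hbc : b ≠ c := fun hbc => hij <| by
    have := ψ.injective (hψi.trans (hbc ▸ hψj.symm))
    simpa using congrArg (· a₀) this
  have hψk : ψ (swap a₀ k) = swap b c :=
    (hψ _ (swap_isSwap_iff.mpr hk.symm)).eq_swap_of_not_commute hka
      (hψi ▸ not_commute_map_swap_swap ψ hk hi hki)
      (hψj ▸ not_commute_map_swap_swap ψ hk hj hkj) hbc
  have hconj : swap a₀ j = swap a₀ k * swap a₀ i * swap a₀ k := ψ.injective <| by
    rw [map_mul, map_mul, hψi, hψj, hψk, swap_mul_swap_mul_swap (Ne.symm hia) (Ne.symm hja),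
      swap_comm]
  apply hj
  simpa [swap_apply_of_ne_of_ne hk hki] using congrArg (· a₀) hconj

theorem exists_forall_map_swap_apply_ne (hψ : ∀ σ : Perm α, σ.IsSwap → (ψ σ).IsSwap) (a₀ : α) :
    ∃ a, ∀ k ≠ a₀, ψ (swap a₀ k) a ≠ a := by
  by_cases h : ∃ i j, i ≠ a₀ ∧ j ≠ a₀ ∧ i ≠ j
  · obtain ⟨i, j, hi, hj, hij⟩ := h
    exact exists_forall_map_swap_apply_ne_of_ne ψ hψ hi hj hij
  push Not at h
  by_cases h' : ∃ i, i ≠ a₀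
  · obtain ⟨i, hi⟩ := h'
    obtain ⟨x, y, hxy, hψi⟩ := hψ _ (swap_isSwap_iff.mpr hi.symm)
    refine ⟨x, fun k hk => ?_⟩
    rw [h k i hk hi, hψi, swap_apply_left]
    exact hxy.symm
  · push Not at h'
    exact ⟨a₀, fun k hk => absurd (h' k) hk⟩

theorem exists_map_swap_eq_swap [Finite α] (hψ : ∀ σ : Perm α, σ.IsSwap → (ψ σ).IsSwap)
    (a₀ : α) : ∃ τ : Perm α, ∀ k, ψ (swap a₀ k) = swap (τ a₀) (τ k) := by
  obtain ⟨a, ha⟩ := exists_forall_map_swap_apply_ne ψ hψ a₀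
  set f : α → α := fun k => ψ (swap a₀ k) a
  have hfa₀ : f a₀ = a := by simp [f, swap_self, ← one_def]
  have hf : ∀ k, ψ (swap a₀ k) = swap a (f k) := by
    intro k
    rcases eq_or_ne k a₀ with rfl | hk
    · rw [hfa₀, swap_self, swap_self, ← one_def, map_one]
    · exact (hψ _ (swap_isSwap_iff.mpr hk.symm)).eq_swap_apply (ha k hk)
  have hinj : f.Injective := fun j k hjk => by
    have := ψ.injective ((hf j).trans (hjk ▸ (hf k).symm))
    simpa using congrArg (· a₀) this
  refine ⟨ofBijective f (Finite.injective_iff_bijective.mp hinj), fun k => ?_⟩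
  rw [ofBijective_apply, ofBijective_apply, hfa₀]
  exact hf k

theorem exists_eq_conj_of_map_isSwap [Finite α] (hψ : ∀ σ : Perm α, σ.IsSwap → (ψ σ).IsSwap) :
    ∃ τ : Perm α, ∀ σ, ψ σ = τ * σ * τ⁻¹ := by
  cases isEmpty_or_nonempty α with
  | inl => exact ⟨1, fun σ => Subsingleton.elim _ _⟩
  | inr hα =>
    obtain ⟨a₀⟩ := hα
    obtain ⟨τ, hτ⟩ := exists_map_swap_eq_swap ψ hψ a₀
    have hEq : ψ.toMonoidHom = (MulAut.conj τ).toMonoidHom := by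
      refine MonoidHom.eq_of_eqOn_dense (closure_range_swap a₀) ?_
      rintro _ ⟨k, rfl⟩
      simp [hτ, swap_apply_apply]
    exact ⟨τ, fun σ => DFunLike.congr_fun hEq σ⟩

end StarTranspositions

end Equiv.Perm

/-- Symmetric groups are A-rigid: every locally inner (class-preserving) automorphism
of `Sym(n)` is inner. -/
theorem symmetric_group_A_rigid (n : ℕ)
    (φ : Equiv.Perm (Fin n) ≃* Equiv.Perm (Fin n))
    (h : ∀ σ : Equiv.Perm (Fin n), IsConj (φ σ) σ) :
    ∃ τ : Equiv.Perm (Fin n), ∀ σ : Equiv.Perm (Fin n), φ σ = τ * σ * τ⁻¹ :=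
  Equiv.Perm.exists_eq_conj_of_map_isSwap φ fun σ hσ => hσ.of_isConj (h σ)
end

section
/- Let p be a prime and let G be a finite group of order p^k with k ≤ 4. Then every locally inner automorphism of G is inner: if φ is an automorphism of G such that φ(x) is conjugate to x for every x ∈ G, then there exists a ∈ G with φ(x) = a x a⁻¹ for all x ∈ G. (p-groups of order at most p⁴ are A-rigid.) -/
/-!
An abelian group has no nontrivial class-preserving automorphisms. Otherwise pick `t ∉ Z(G)`
with `t Z(G)` central in `G / Z(G)`. The conjugates of `t` lie in `Z(G) t`, so its centralizer
`C` has index at most `|Z(G)|`, while `C` contains `Z(G)` properly and has `⟨Z(G), t⟩` in its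
centre; for `|G| ≤ p⁴` this forces `C` to be abelian of index `p`.

Given an abelian normal subgroup `A` of index `p` and `g ∉ A`, compose `φ` with an inner
automorphism so that it fixes `g`. Writing a conjugator as `gʲ b` with `j < p`, `b ∈ A`, the map
agrees at each `a ∈ A` with conjugation by some `gʲ`, so `A` is the union of the `p` subgroups
`{a | φ a = gʲ a g⁻ʲ}`. A `p`-group is not a union of `p` proper subgroups, so a single `gʲ`
works on all of `A`, and also on `g`, hence on `G = ⟨A, g⟩`.
-/

open Subgroup
open scoped Pointwise commutatorElement

namespace Subgroup

variable {G : Type*} [Group G]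

theorem card_lt_card_of_lt [Finite G] {H K : Subgroup G} (h : H < K) :
    Nat.card H < Nat.card K :=
  (card_le_of_le h.le).lt_of_ne fun e => h.ne (eq_of_le_of_card_ge h.le e.ge)

theorem exists_lt_inv_pow_mul_mem {p : ℕ} [Fact p.Prime] {A : Subgroup G} [A.Normal]
    (hA : A.index = p) {g : G} (hg : g ∉ A) (x : G) : ∃ j < p, (g ^ j)⁻¹ * x ∈ A := by
  classical
  have hQ : Nat.card (G ⧸ A) = p := by rw [← index_eq_card, hA]
  have : Finite (G ⧸ A) :=
    Nat.finite_of_card_ne_zero (by rw [hQ]; exact (Fact.out : p.Prime).ne_zero)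
  have hg' : (g : G ⧸ A) ≠ 1 := by rwa [Ne, QuotientGroup.eq_one_iff]
  have horder : orderOf (g : G ⧸ A) = p := orderOf_eq_prime (hQ ▸ pow_card_eq_one') hg'
  obtain ⟨j, hj, hjx⟩ := Finset.mem_image.mp <| mem_zpowers_iff_mem_range_orderOf.mp <|
    mem_zpowers_of_prime_card hQ hg' (g' := (x : G ⧸ A))
  refine ⟨j, horder ▸ Finset.mem_range.mp hj, ?_⟩
  rw [← QuotientGroup.eq, QuotientGroup.mk_pow, hjx]

theorem index_centralizer_le_card [Finite G] {t : G} {H : Subgroup G}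
    (ht : ∀ y, ⁅t, y⁆ ∈ H) : (centralizer {t}).index ≤ Nat.card H := by
  have hindex : (centralizer {t}).index = (MulAction.stabilizer (ConjAct G) t).index := by
    apply Nat.eq_of_mul_eq_mul_left (Nat.card_pos (α := centralizer {t}))
    rw [card_mul_index, nat_card_centralizer_nat_card_stabilizer, card_mul_index,
      Nat.card_congr ConjAct.toConjAct.toEquiv]
  rw [hindex, MulAction.index_stabilizer, ← SetLike.coe_sort_coe, Nat.card_coe_set_eq]
  calc (MulAction.orbit (ConjAct G) t).ncard ≤ ((· * t) '' (H : Set G)).ncard :=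
        Set.ncard_le_ncard ?_ (Set.toFinite _)
    _ ≤ (H : Set G).ncard := Set.ncard_image_le (Set.toFinite _)
  rintro _ ⟨c, rfl⟩
  refine ⟨⁅t, ConjAct.ofConjAct c⁆⁻¹, inv_mem (ht _), ?_⟩
  simp only [ConjAct.smul_def, commutatorElement_def]
  group

theorem center_lt_upperCentralSeries_two [Group.IsNilpotent G] (h : center G ≠ ⊤) :
    center G < upperCentralSeries G 2 := by
  have hclass : 2 ≤ Group.nilpotencyClass G := by
    by_contra! hlt
    exact h (upperCentralSeries_one G ▸
      upperCentralSeries_eq_top_iff_nilpotencyClass_le.mpr (Nat.le_of_lt_succ hlt))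
  rw [← upperCentralSeries_one G]
  exact upperCentralSeries.StrictMonoOn G (Set.mem_Iic.mpr (by omega)) hclass one_lt_two

theorem center_lt_centralizer_singleton {t : G} (ht : t ∉ center G) :
    center G < centralizer {t} :=
  SetLike.lt_iff_le_and_exists.mpr
    ⟨center_le_centralizer _, t, mem_centralizer_singleton_iff.mpr rfl, ht⟩

theorem center_lt_map_center_centralizer_singleton {t : G} (ht : t ∉ center G) :
    center G < (center (centralizer {t})).map (centralizer {t}).subtype := by
  refine SetLike.lt_iff_le_and_exists.mpr ⟨fun z hz => ?_, t, ?_, ht⟩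
  · refine mem_map.mpr ⟨⟨z, center_le_centralizer _ hz⟩, ?_, rfl⟩
    exact mem_center_iff.mpr fun y => Subtype.ext (mem_center_iff.mp hz y)
  · refine mem_map.mpr ⟨⟨t, mem_centralizer_singleton_iff.mpr rfl⟩, ?_, rfl⟩
    exact mem_center_iff.mpr fun y => Subtype.ext (mem_centralizer_singleton_iff.mp y.2)

end Subgroup

theorem isMulCommutative_of_index_center_dvd {G : Type*} [Group G] {p : ℕ} [Fact p.Prime]
    (h : (center G).index ∣ p) : IsMulCommutative G :=
  have := isCyclic_of_card_dvd_prime (α := G ⧸ center G) (index_eq_card (center G) ▸ h)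
  isMulCommutative_of_isCyclic_quotient_center_self G

namespace IsPGroup

variable {p : ℕ} [hp : Fact p.Prime] {G : Type*} [Group G]

theorem prime_le_index (hG : IsPGroup p G) {H : Subgroup G} [H.FiniteIndex] (hH : H ≠ ⊤) :
    p ≤ H.index := by
  obtain ⟨n, hn⟩ := hG.index H
  have hn0 : n ≠ 0 := by
    rintro rfl
    exact hH (index_eq_one.mp (by rw [hn, pow_zero]))
  rw [hn]
  exact Nat.le_self_pow hn0 p

/- Neumann: a finite cover satisfies `∑ 1 / [G : Hᵢ] ≥ 1`, with equality only if the `Hᵢ`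
are pairwise disjoint. Here each term is at most `1 / p`, and any two `Hᵢ` share `1`. -/
theorem exists_eq_top_of_biUnion_eq_univ [Finite G] (hG : IsPGroup p G) {ι : Type*}
    {s : Finset ι} (hs : s.card ≤ p) {H : ι → Subgroup G}
    (hcover : ⋃ i ∈ s, (H i : Set G) = Set.univ) : ∃ i ∈ s, H i = ⊤ := by
  classical
  by_contra! hne
  have hcover' : ⋃ i ∈ s, (1 : G) • (H i : Set G) = Set.univ := by simpa using hcover
  have hp0 : (0 : ℚ) < p := by exact_mod_cast hp.out.pos
  have hsum_le : ∑ i ∈ s, ((H i).index : ℚ)⁻¹ ≤ s.card * (p : ℚ)⁻¹ := by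
    rw [← nsmul_eq_mul]
    refine Finset.sum_le_card_nsmul _ _ _ fun i hi => inv_anti₀ hp0 ?_
    exact_mod_cast hG.prime_le_index (hne i hi)
  have hsum := one_le_sum_inv_index_of_leftCoset_cover hcover'
  have hcard : s.card ≤ 1 := by
    have hdisj := pairwiseDisjoint_leftCoset_cover_of_sum_inv_index_eq_one hcover'
      (le_antisymm (hsum_le.trans ?_) hsum)
    · rw [Finset.filter_true_of_mem fun i _ => (H i).finiteIndex_of_finite] at hdisj
      exact Finset.card_le_one.mpr fun i hi j hj =>
        hdisj.elim_set hi hj 1 (by simp [one_mem]) (by simp [one_mem])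
    · rw [← div_eq_mul_inv, div_le_one hp0]
      exact_mod_cast hs
  have : (s.card : ℚ) * (p : ℚ)⁻¹ < 1 := by
    rw [← div_eq_mul_inv, div_lt_one hp0]
    exact_mod_cast hcard.trans_lt hp.out.one_lt
  linarith

theorem exists_eq_conj_pow_of_forall_isConj [Finite G] (hG : IsPGroup p G) {A : Subgroup G}
    [A.Normal] [IsMulCommutative A] (hA : A.index = p) {g : G} (hg : g ∉ A) {ψ : G →* G}
    (hψ : ∀ x, IsConj (ψ x) x) (hψg : ψ g = g) :
    ∃ j : ℕ, ∀ x, ψ x = g ^ j * x * (g ^ j)⁻¹ := by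
  set S : ℕ → Subgroup G := fun j => ψ.eqLocus (MulAut.conj (g ^ j)).toMonoidHom
  have hS : ∀ j x, x ∈ S j ↔ ψ x = g ^ j * x * (g ^ j)⁻¹ := fun _ _ => Iff.rfl
  have hcover : ⋃ j ∈ Finset.range p, ((S j).subgroupOf A : Set A) = Set.univ := by
    refine Set.eq_univ_of_forall fun a => ?_
    obtain ⟨c, hc⟩ := isConj_iff.mp (hψ a).symm
    obtain ⟨j, hj, hb⟩ := A.exists_lt_inv_pow_mul_mem hA hg c
    simp only [Set.mem_iUnion, Finset.mem_range]
    refine ⟨j, hj, ?_⟩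
    have hab := setLike_mul_comm hb a.2
    rw [SetLike.mem_coe, mem_subgroupOf, hS, ← hc]
    calc c * a * c⁻¹ = g ^ j * ((g ^ j)⁻¹ * c * a) * c⁻¹ := by group
      _ = g ^ j * (a * ((g ^ j)⁻¹ * c)) * c⁻¹ := by rw [hab]
      _ = g ^ j * a * (g ^ j)⁻¹ := by group
  obtain ⟨j, -, hj⟩ := (hG.to_subgroup A).exists_eq_top_of_biUnion_eq_univ (by simp) hcover
  refine ⟨j, fun x => ?_⟩
  obtain ⟨i, -, hi⟩ := A.exists_lt_inv_pow_mul_mem hA hg x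
  have hgS : g ∈ S j := by rw [hS, hψg, ← pow_succ, pow_succ', mul_inv_cancel_right]
  have hx := mul_mem (pow_mem hgS i) (subgroupOf_eq_top.mp hj hi)
  rwa [mul_inv_cancel_left, hS] at hx

theorem exists_eq_conj_of_forall_isConj [Finite G] (hG : IsPGroup p G) {A : Subgroup G}
    [A.Normal] [IsMulCommutative A] (hA : A.index = p) {ψ : G →* G}
    (hψ : ∀ x, IsConj (ψ x) x) : ∃ a, ∀ x, ψ x = a * x * a⁻¹ := by
  have hAtop : A ≠ ⊤ := fun h => hp.out.one_lt.ne' (hA ▸ index_eq_one.mpr h)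
  obtain ⟨g, -, hg⟩ := SetLike.exists_of_lt (lt_top_iff_ne_top.mpr hAtop)
  obtain ⟨c, hc⟩ := isConj_iff.mp (hψ g)
  have hcψ : ∀ x, IsConj (c * ψ x * c⁻¹) x :=
    fun x => (isConj_iff.mpr ⟨c⁻¹, by group⟩).trans (hψ x)
  obtain ⟨j, hj⟩ := hG.exists_eq_conj_pow_of_forall_isConj hA hg
    (ψ := (MulAut.conj c).toMonoidHom.comp ψ) hcψ hc
  refine ⟨c⁻¹ * g ^ j, fun x => ?_⟩
  have hx : c * ψ x * c⁻¹ = g ^ j * x * (g ^ j)⁻¹ := hj x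
  rw [show ψ x = c⁻¹ * (c * ψ x * c⁻¹) * c by group, hx]
  group

section CardLePowFour

variable [Finite G] {k : ℕ} (hcard : Nat.card G = p ^ k) (hk : k ≤ 4)

section Centralizer

variable {t : G} (ht : ∀ y, ⁅t, y⁆ ∈ center G) (htZ : t ∉ center G)
include hcard hk ht htZ

theorem index_centralizer_eq_prime : (centralizer {t}).index = p := by
  have hG := of_card hcard
  obtain ⟨z, hz⟩ := iff_card.mp (hG.to_subgroup (center G))
  obtain ⟨c, hc⟩ := iff_card.mp (hG.to_subgroup (centralizer {t}))
  obtain ⟨i, hi⟩ := hG.index (centralizer {t})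
  have hci : c + i = k := Nat.pow_right_injective hp.out.two_le <| by
    simp only [pow_add, ← hc, ← hi, card_mul_index, hcard]
  have hiz : i ≤ z := (Nat.pow_le_pow_iff_right hp.out.one_lt).mp <| by
    rw [← hi, ← hz]; exact index_centralizer_le_card ht
  have hzc : z < c := (Nat.pow_lt_pow_iff_right hp.out.one_lt).mp <| by
    rw [← hz, ← hc]; exact card_lt_card_of_lt (center_lt_centralizer_singleton htZ)
  have hi0 : i ≠ 0 := by
    rintro rfl
    have hC : centralizer {t} = ⊤ := index_eq_one.mp (by rw [hi, pow_zero])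
    exact htZ (mem_center_iff.mpr fun y => mem_centralizer_singleton_iff.mp (hC ▸ mem_top y))
  rw [hi, show i = 1 by omega, pow_one]

theorem isMulCommutative_centralizer : IsMulCommutative (centralizer {t}) := by
  have hG := of_card hcard
  set C := centralizer {t}
  obtain ⟨z, hz⟩ := iff_card.mp (hG.to_subgroup (center G))
  obtain ⟨w, hw⟩ := iff_card.mp ((hG.to_subgroup C).to_subgroup (center C))
  obtain ⟨e, he⟩ := (hG.to_subgroup C).index (center C)
  have hCk : Nat.card C * p = p ^ k := by
    rw [← hcard, ← card_mul_index C, index_centralizer_eq_prime hcard hk ht htZ]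
  have hwe : w + e + 1 = k := Nat.pow_right_injective hp.out.two_le <| by
    simp only [pow_succ, pow_add, ← hw, ← he, card_mul_index, hCk]
  have hzw : z < w := by
    rw [← Nat.pow_lt_pow_iff_right hp.out.one_lt, ← hz, ← hw,
      ← card_map_of_injective C.subtype_injective]
    exact card_lt_card_of_lt (center_lt_map_center_centralizer_singleton htZ)
  have hz0 : z ≠ 0 := by
    have : Nontrivial G := nontrivial_of_ne t 1 fun h => htZ (h ▸ one_mem _)
    have := hG.center_nontrivial
    have := Finite.one_lt_card (α := center G)
    rintro rfl
    simp [hz] at this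
  apply isMulCommutative_of_index_center_dvd (p := p)
  rw [he]
  exact (pow_dvd_pow p (by omega : e ≤ 1)).trans (pow_one p).dvd

end Centralizer

include hcard hk in
theorem exists_isMulCommutative_normal_index_eq (hZ : center G ≠ ⊤) :
    ∃ A : Subgroup G, A.Normal ∧ IsMulCommutative A ∧ A.index = p := by
  have := (of_card hcard).isNilpotent
  obtain ⟨t, ht2, htZ⟩ := SetLike.exists_of_lt (center_lt_upperCentralSeries_two hZ)
  have ht : ∀ y, ⁅t, y⁆ ∈ center G := by
    simpa [Subgroup.upperCentralSeries_one] using Subgroup.mem_upperCentralSeries_succ_iff.mp ht2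
  have hindex := index_centralizer_eq_prime hcard hk ht htZ
  have hk0 : k ≠ 0 := by
    rintro rfl
    have := hindex ▸ index_dvd_card (centralizer {t})
    rw [hcard, pow_zero, Nat.dvd_one] at this
    exact hp.out.ne_one this
  refine ⟨centralizer {t}, normal_of_index_eq_minFac_card ?_,
    isMulCommutative_centralizer hcard hk ht htZ, hindex⟩
  rw [hindex, hcard, hp.out.pow_minFac hk0]

end CardLePowFour

end IsPGroup

/-- Finite `p`-groups of order at most `p^4` are A-rigid: every locally inner automorphism
is inner. -/
theorem p_group_order_le_p4_A_rigid {G : Type*} [Group G] [Finite G]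
    (p k : ℕ) (hp : p.Prime) (hk : k ≤ 4) (hcard : Nat.card G = p ^ k)
    (φ : G ≃* G) (h : ∀ x : G, IsConj (φ x) x) :
    ∃ a : G, ∀ x : G, φ x = a * x * a⁻¹ := by
  have := Fact.mk hp
  by_cases hZ : center G = ⊤
  · refine ⟨1, fun x => ?_⟩
    simpa using (h x).eq_of_left_mem_center (coe_center G ▸ hZ ▸ mem_top (φ x))
  obtain ⟨A, _, _, hA⟩ := IsPGroup.exists_isMulCommutative_normal_index_eq hcard hk hZ
  exact (IsPGroup.of_card hcard).exists_eq_conj_of_forall_isConj hA (ψ := φ.toMonoidHom) h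
end

section
/- Let G be a finite group which is an internal central product of subgroups H and K, i.e., every element of H commutes with every element of K and H and K together generate G. If every locally inner automorphism of H is inner and every locally inner automorphism of K is inner, then every locally inner automorphism of G is inner. (Central products of A-rigid groups are A-rigid.) -/
/-!
Since `K` centralizes `H` and `H ⊔ K = G`, every element of `G` is `h * z` with `h ∈ H` and `z`
centralizing `H`, so conjugation by an element of `G` acts on `H` as conjugation by an element
of `H`. Hence a locally inner automorphism `φ` of `G` maps `H` onto itself (apply the same to
`φ⁻¹`) and restricts to a locally inner automorphism of `H`, which is conjugation by some
`a ∈ H`; likewise `φ` is conjugation by some `b ∈ K` on `K`. As `a` centralizes `K` and `b`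
centralizes `H`, conjugation by `a * b` agrees with `φ` on `H` and on `K`, hence on `G`.
-/

namespace Subgroup

variable {G : Type*} [Group G]

theorem mul_mul_inv_eq_of_mem_centralizer {H : Subgroup G} {x z : G} (hx : x ∈ H)
    (hz : z ∈ centralizer H) : z * x * z⁻¹ = x := by
  rw [← mem_centralizer_iff.mp hz x hx, mul_inv_cancel_right]

theorem exists_mem_mul_mem_centralizer_eq {H : Subgroup G} (hH : H ⊔ centralizer H = ⊤) (g : G) :
    ∃ h ∈ H, ∃ z ∈ centralizer H, h * z = g := by
  have hg : g ∈ ((H ⊔ centralizer H : Subgroup G) : Set G) := hH ▸ mem_top g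
  rwa [coe_mul_of_right_le_normalizer_left H _ (centralizer_le_normalizer (H : Set G)),
    Set.mem_mul] at hg

theorem exists_mem_conj_eq_of_isConj {H : Subgroup G} (hH : H ⊔ centralizer H = ⊤) {x y : G}
    (hx : x ∈ H) (hxy : IsConj x y) : ∃ c ∈ H, c * x * c⁻¹ = y := by
  obtain ⟨g, rfl⟩ := isConj_iff.mp hxy
  obtain ⟨c, hc, z, hz, rfl⟩ := exists_mem_mul_mem_centralizer_eq hH g
  refine ⟨c, hc, ?_⟩
  calc c * x * c⁻¹ = c * (z * x * z⁻¹) * c⁻¹ := by rw [mul_mul_inv_eq_of_mem_centralizer hx hz]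
    _ = c * z * x * (c * z)⁻¹ := by group

end Subgroup

namespace MulEquiv

open Subgroup

variable {G : Type*} [Group G]

def IsLocallyInner (φ : G ≃* G) : Prop :=
  ∀ x, IsConj (φ x) x

namespace IsLocallyInner

variable {φ : G ≃* G} {H : Subgroup G}

theorem symm (hφ : φ.IsLocallyInner) : φ.symm.IsLocallyInner := fun x => by
  simpa using (hφ (φ.symm x)).symm

theorem map_le (hφ : φ.IsLocallyInner) (hH : H ⊔ centralizer H = ⊤) :
    H.map (φ : G →* G) ≤ H := by
  rintro _ ⟨x, hx, rfl⟩
  show φ x ∈ H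
  obtain ⟨c, hc, hcx⟩ := exists_mem_conj_eq_of_isConj hH hx (hφ x).symm
  rw [← hcx]
  exact H.mul_mem (H.mul_mem hc hx) (H.inv_mem hc)

theorem map_eq (hφ : φ.IsLocallyInner) (hH : H ⊔ centralizer H = ⊤) :
    H.map (φ : G →* G) = H := by
  refine le_antisymm (hφ.map_le hH) ?_
  rw [map_equiv_eq_comap_symm, ← map_le_iff_le_comap]
  exact hφ.symm.map_le hH

def restrict (hφ : φ.IsLocallyInner) (hH : H ⊔ centralizer H = ⊤) : H ≃* H :=
  (φ.subgroupMap H).trans (MulEquiv.subgroupCongr (hφ.map_eq hH))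

theorem restrict_isLocallyInner (hφ : φ.IsLocallyInner) (hH : H ⊔ centralizer H = ⊤) :
    (hφ.restrict hH).IsLocallyInner := by
  intro x
  obtain ⟨c, hc, hcx⟩ := exists_mem_conj_eq_of_isConj hH x.2 (hφ x).symm
  refine (isConj_iff.mpr ⟨⟨c, hc⟩, Subtype.ext ?_⟩).symm
  exact hcx

end IsLocallyInner

end MulEquiv

namespace MonoidHom

open Subgroup

variable {G : Type*} [Group G]

theorem apply_eq_conj_mul_of_sup_eq_top (f : G →* G) {H K : Subgroup G} (hHK : H ⊔ K = ⊤)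
    (hKH : K ≤ centralizer H) {a b : G} (ha : a ∈ H) (hb : b ∈ K)
    (hfH : ∀ x ∈ H, f x = a * x * a⁻¹) (hfK : ∀ x ∈ K, f x = b * x * b⁻¹) (x : G) :
    f x = a * b * x * (a * b)⁻¹ := by
  have hHK' : H ≤ centralizer K := le_centralizer_iff.mpr hKH
  have hab : a * b = b * a := mem_centralizer_iff.mp (hKH hb) a ha
  suffices H ⊔ K ≤ f.eqLocus (MulAut.conj (a * b)).toMonoidHom by
    exact (hHK ▸ this) (mem_top x)
  refine sup_le (fun y hy => ?_) (fun y hy => ?_) <;> show f y = MulAut.conj (a * b) y <;>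
    rw [MulAut.conj_apply]
  · calc f y = a * (b * y * b⁻¹) * a⁻¹ := by
          rw [hfH y hy, mul_mul_inv_eq_of_mem_centralizer hy (hKH hb)]
      _ = a * b * y * (a * b)⁻¹ := by group
  · calc f y = b * (a * y * a⁻¹) * b⁻¹ := by
          rw [hfK y hy, mul_mul_inv_eq_of_mem_centralizer hy (hHK' ha)]
      _ = a * b * y * (a * b)⁻¹ := by rw [hab]; group

end MonoidHom

open Subgroup in
theorem central_product_A_rigid_general {G : Type*} [Group G]
    (H K : Subgroup G)
    (hcomm : ∀ h ∈ H, ∀ k ∈ K, h * k = k * h)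
    (hgen : H ⊔ K = ⊤)
    (hH : ∀ ψ : H ≃* H, (∀ x : H, IsConj (ψ x) x) → ∃ a : H, ∀ x : H, ψ x = a * x * a⁻¹)
    (hK : ∀ ψ : K ≃* K, (∀ x : K, IsConj (ψ x) x) → ∃ a : K, ∀ x : K, ψ x = a * x * a⁻¹)
    (φ : G ≃* G) (h : ∀ x : G, IsConj (φ x) x) :
    ∃ a : G, ∀ x : G, φ x = a * x * a⁻¹ := by
  have hKH : K ≤ centralizer H := fun k hk => mem_centralizer_iff.mpr fun x hx => hcomm x hx k hk
  have hHK : H ≤ centralizer K := le_centralizer_iff.mpr hKH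
  have hH' : H ⊔ centralizer H = ⊤ := top_le_iff.mp (hgen ▸ sup_le_sup_left hKH H)
  have hK' : K ⊔ centralizer K = ⊤ := by
    rw [eq_top_iff, ← hgen, sup_comm]
    exact sup_le_sup_left hHK K
  have hφ : φ.IsLocallyInner := h
  obtain ⟨a, ha⟩ := hH _ (hφ.restrict_isLocallyInner hH')
  obtain ⟨b, hb⟩ := hK _ (hφ.restrict_isLocallyInner hK')
  refine ⟨a * b, (φ : G →* G).apply_eq_conj_mul_of_sup_eq_top hgen hKH a.2 b.2 ?_ ?_⟩
  · exact fun x hx => congrArg Subtype.val (ha ⟨x, hx⟩)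
  · exact fun x hx => congrArg Subtype.val (hb ⟨x, hx⟩)

/-- Central products of A-rigid finite groups are A-rigid: if a finite group `G` is the
internal central product of subgroups `H` and `K` (elements of `H` and `K` commute and
together they generate `G`), and every locally inner automorphism of `H` (resp. `K`) is
inner, then every locally inner automorphism of `G` is inner. -/
theorem central_product_A_rigid {G : Type*} [Group G] [Finite G]
    (H K : Subgroup G)
    (hcomm : ∀ h ∈ H, ∀ k ∈ K, h * k = k * h)
    (hgen : H ⊔ K = ⊤)
    (hH : ∀ ψ : H ≃* H, (∀ x : H, IsConj (ψ x) x) → ∃ a : H, ∀ x : H, ψ x = a * x * a⁻¹)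
    (hK : ∀ ψ : K ≃* K, (∀ x : K, IsConj (ψ x) x) → ∃ a : K, ∀ x : K, ψ x = a * x * a⁻¹)
    (φ : G ≃* G) (h : ∀ x : G, IsConj (φ x) x) :
    ∃ a : G, ∀ x : G, φ x = a * x * a⁻¹ :=
  central_product_A_rigid_general H K hcomm hgen hH hK φ h
end

section
/- Let G be a finite nilpotent group of nilpotency class c ≥ 1. Then the quotient group Sha(G) = Aut_c(G)/Inn(G) of locally inner automorphisms modulo inner automorphisms is nilpotent of nilpotency class at most c − 1. -/
/-
A class-preserving automorphism moves each `u` by a commutator, `φ u * u⁻¹ = ⁅g, u⁆`, so it acts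
trivially on every factor `γᵢ / γᵢ₊₁` of the lower central series of `G`. Let `Sₖ`
(`lowerCentralSeriesStabilizer G k`) be the group of automorphisms acting trivially on all the
factors `γᵢ / γᵢ₊ₖ₊₁`; an element-wise commutator computation gives `⁅Sₖ, S₀⁆ ≤ Sₖ₊₁`. Hence the
`k`-th term of the lower central series of `Aut_c(G) ≤ S₀` lies in `Sₖ`, and `S_{c-1}` is trivial
because `γ_c = 1`. So `Aut_c(G)` itself, and a fortiori its quotient `Sha(G)`, is nilpotent of
class at most `c - 1`.
-/

/-- The class-preserving (locally inner) automorphisms of a group `G` form a subgroup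
of `MulAut G`. -/
def classPreservingAut (G : Type*) [Group G] : Subgroup (MulAut G) where
  carrier := {φ : MulAut G | ∀ x : G, IsConj (φ x) x}
  one_mem' := fun x => IsConj.refl x
  mul_mem' := fun {a b} ha hb x => (ha (b x)).trans (hb x)
  inv_mem' := fun {a} ha x => by
    have := (ha (a⁻¹ x)).symm
    simpa using this

/-- The inner automorphisms, viewed as a subgroup of the group of class-preserving
automorphisms. -/
def innInClassPreserving (G : Type*) [Group G] : Subgroup (classPreservingAut G) :=
  (MulAut.conj (G := G)).range.subgroupOf (classPreservingAut G)

instance (G : Type*) [Group G] : (MulAut.conj (G := G)).range.Normal := by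
  constructor
  intro m hm g
  obtain ⟨a, rfl⟩ := hm
  refine ⟨g a, ?_⟩
  ext x
  simp [MulAut.conj, mul_assoc]

instance (G : Type*) [Group G] : (innInClassPreserving G).Normal :=
  Subgroup.Normal.subgroupOf inferInstance _

open scoped commutatorElement

namespace Subgroup

variable {G : Type*} [Group G]

theorem nilpotencyClass_le_of_lowerCentralSeries_eq_bot {S : Subgroup G} [Group.IsNilpotent S]
    {n : ℕ} (h : S.lowerCentralSeries n = ⊥) : Group.nilpotencyClass S ≤ n := by
  rw [← lowerCentralSeries_eq_bot_iff_nilpotencyClass_le, ← map_subtype_inj, map_bot,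
    top_subtype_lowerCentralSeries, h]

end Subgroup

section LowerCentralSeriesStabilizer

variable {G : Type*} [Group G]

local notation "γ" => Subgroup.lowerCentralSeries (⊤ : Subgroup G)

theorem MulEquiv.apply_mem_lowerCentralSeries (φ : G ≃* G) {n : ℕ} {u : G} (hu : u ∈ γ n) :
    φ u ∈ γ n :=
  Subgroup.characteristic_iff_le_comap.mp inferInstance φ hu

variable (G) in
def lowerCentralSeriesStabilizer (k : ℕ) : Subgroup (MulAut G) where
  carrier := {φ | ∀ i, ∀ u ∈ γ i, φ u * u⁻¹ ∈ γ (i + k + 1)}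
  one_mem' i u _ := by simp
  mul_mem' {φ ψ} hφ hψ i u hu := by
    have h : (φ * ψ) u * u⁻¹ = φ (ψ u * u⁻¹) * (φ u * u⁻¹) := by
      simp only [MulAut.mul_apply, map_mul, map_inv]
      group
    rw [h]
    exact mul_mem (φ.apply_mem_lowerCentralSeries (hψ i u hu)) (hφ i u hu)
  inv_mem' {φ} hφ i u hu := by
    have h := inv_mem (hφ i _ (φ⁻¹.apply_mem_lowerCentralSeries hu))
    rwa [MulAut.apply_inv_self, mul_inv_rev, inv_inv] at h

theorem mem_lowerCentralSeriesStabilizer {k : ℕ} {φ : MulAut G} :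
    φ ∈ lowerCentralSeriesStabilizer G k ↔ ∀ i, ∀ u ∈ γ i, φ u * u⁻¹ ∈ γ (i + k + 1) :=
  Iff.rfl

theorem classPreservingAut_le_lowerCentralSeriesStabilizer_zero :
    classPreservingAut G ≤ lowerCentralSeriesStabilizer G 0 := by
  intro φ hφ
  rw [mem_lowerCentralSeriesStabilizer]
  intro i u hu
  obtain ⟨g, hg⟩ := isConj_iff.mp (hφ u).symm
  rw [← hg, show g * u * g⁻¹ * u⁻¹ = (u * g * u⁻¹ * g⁻¹)⁻¹ by group]
  exact inv_mem (Subgroup.lowerCentralSeries_isDescendingCentralSeries.2 u i hu g)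

theorem commutator_lowerCentralSeriesStabilizer_le (k : ℕ) :
    ⁅lowerCentralSeriesStabilizer G k, lowerCentralSeriesStabilizer G 0⁆ ≤
      lowerCentralSeriesStabilizer G (k + 1) := by
  rw [Subgroup.commutator_le]
  intro ψ hψ φ hφ
  rw [mem_lowerCentralSeriesStabilizer] at hψ hφ ⊢
  intro i u hu
  set x := ψ⁻¹ (φ⁻¹ u)
  have hux : u = φ (ψ x) := by simp [x]
  have hx : x ∈ γ i := ψ⁻¹.apply_mem_lowerCentralSeries (φ⁻¹.apply_mem_lowerCentralSeries hu)
  set a := φ x * x⁻¹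
  set b := ψ x * x⁻¹
  have ha : a ∈ γ (i + 1) := hφ i x hx
  have hb : b ∈ γ (i + k + 1) := hψ i x hx
  have h : ⁅ψ, φ⁆ u * u⁻¹ = (ψ a * a⁻¹) * ⁅b, a⁆⁻¹ * (φ b * b⁻¹)⁻¹ := by
    simp only [hux, a, b, commutatorElement_def, MulAut.mul_apply, MulAut.inv_apply_self, map_mul,
      map_inv]
    group
  rw [h]
  refine mul_mem (mul_mem ?_ (inv_mem ?_)) (inv_mem (hφ _ b hb))
  · rw [← add_assoc, add_right_comm i k 1]
    exact hψ (i + 1) a ha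
  · exact Subgroup.lowerCentralSeries_isDescendingCentralSeries.2 b _ hb a

theorem lowerCentralSeries_le_lowerCentralSeriesStabilizer {H : Subgroup (MulAut G)}
    (hH : H ≤ lowerCentralSeriesStabilizer G 0) :
    ∀ k, H.lowerCentralSeries k ≤ lowerCentralSeriesStabilizer G k
  | 0 => hH
  | k + 1 => (Subgroup.commutator_mono (lowerCentralSeries_le_lowerCentralSeriesStabilizer hH k)
      hH).trans (commutator_lowerCentralSeriesStabilizer_le k)

theorem lowerCentralSeriesStabilizer_eq_bot {k : ℕ} (h : γ (k + 1) = ⊥) :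
    lowerCentralSeriesStabilizer G k = ⊥ := by
  refine (Subgroup.eq_bot_iff_forall _).mpr fun φ hφ ↦ MulEquiv.ext fun u ↦ ?_
  have hu := hφ 0 u (Subgroup.mem_top u)
  rwa [zero_add, h, Subgroup.mem_bot, mul_inv_eq_one] at hu

end LowerCentralSeriesStabilizer

theorem sha_of_nilpotent_group_nilpotent_general (G : Type*) [Group G]
    [Group.IsNilpotent G] (c : ℕ) (hclass : Group.nilpotencyClass G = c) :
    ∃ _ : Group.IsNilpotent (classPreservingAut G ⧸ innInClassPreserving G),
      Group.nilpotencyClass (classPreservingAut G ⧸ innInClassPreserving G) ≤ c - 1 := by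
  have hG : Subgroup.lowerCentralSeries (⊤ : Subgroup G) (c - 1 + 1) = ⊥ :=
    Subgroup.lowerCentralSeries_eq_bot_iff_nilpotencyClass_le.mpr (by omega)
  have hAut : (classPreservingAut G).lowerCentralSeries (c - 1) = ⊥ :=
    eq_bot_iff.mpr <| (lowerCentralSeries_le_lowerCentralSeriesStabilizer
      classPreservingAut_le_lowerCentralSeriesStabilizer_zero (c - 1)).trans
      (lowerCentralSeriesStabilizer_eq_bot hG).le
  have := Subgroup.isNilpotent_of_lowerCentralSeries_eq_bot hAut
  exact ⟨inferInstance, (Group.nilpotencyClass_quotient_le _).trans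
    (Subgroup.nilpotencyClass_le_of_lowerCentralSeries_eq_bot hAut)⟩

/-- If `G` is a finite nilpotent group of nilpotency class `c ≥ 1`, then
`Sha(G) = Aut_c(G)/Inn(G)` is nilpotent of class at most `c - 1` (Sah). -/
theorem sha_of_nilpotent_group_nilpotent (G : Type*) [Group G] [Finite G]
    [Group.IsNilpotent G] (c : ℕ) (hc : 1 ≤ c) (hclass : Group.nilpotencyClass G = c) :
    ∃ _ : Group.IsNilpotent (classPreservingAut G ⧸ innInClassPreserving G),
      Group.nilpotencyClass (classPreservingAut G ⧸ innInClassPreserving G) ≤ c - 1 :=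
  sha_of_nilpotent_group_nilpotent_general G c hclass
end

section
/- There exists a group G of order 32 admitting a locally inner automorphism that is not inner: an automorphism φ of G such that φ(x) is conjugate to x for every x ∈ G, yet there is no a ∈ G with φ(x) = a x a⁻¹ for all x ∈ G. (In other words, there is a non-Sha-rigid group of order 32.) -/
/-!
Wall's example is the holomorph `C₈ ⋊ (ZMod 8)ˣ`. For an abelian `N` with a `G`-action, a
1-cocycle `f : G → N` gives the automorphism `(n, g) ↦ (f g * n, g)` of `N ⋊ G`. Conjugating by
`c ∈ N` changes `(n, g)` by the coboundary `g • c / c`, so the twist is class-preserving as soon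
as every single value `f g` is a coboundary value; and when the action is faithful, an inner twist
must be conjugation by an element of `N`, which makes `f` a coboundary. On `(ZMod 8)ˣ` the cocycle
`u ↦ 4 · [u ∈ {5, 7}]` is of the first kind but not of the second: `(3 - 1) c = 0` forces `c` even,
while `(5 - 1) c = 4` forces `c` odd.
-/

open groupCohomology

theorem MulEquiv.exists_classPreserving_not_inner {G H : Type*} [Group G] [Group H]
    (e : G ≃* H) {φ : G ≃* G} (hconj : ∀ x, IsConj (φ x) x)
    (hinner : ¬ ∃ a : G, ∀ x, φ x = a * x * a⁻¹) :
    ∃ ψ : H ≃* H, (∀ y, IsConj (ψ y) y) ∧ ¬ ∃ b : H, ∀ y, ψ y = b * y * b⁻¹ := by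
  refine ⟨e.symm.trans (φ.trans e), fun y => ?_, fun ⟨b, hb⟩ => hinner ⟨e.symm b, fun x => ?_⟩⟩
  · simpa using e.toMonoidHom.map_isConj (hconj (e.symm y))
  · simpa using congrArg e.symm (hb (e x))

namespace SemidirectProduct

variable {N G : Type*} [CommGroup N] [Group G] [MulDistribMulAction G N]

def twist (f : G → N) (hf : IsMulCocycle₁ f) :
    N ⋊[MulDistribMulAction.toMulAut G N] G ≃* N ⋊[MulDistribMulAction.toMulAut G N] G where
  toFun x := ⟨f x.right * x.left, x.right⟩
  invFun x := ⟨(f x.right)⁻¹ * x.left, x.right⟩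
  left_inv x := by simp
  right_inv x := by simp
  map_mul' x y := by
    ext
    · simp only [mul_left, mul_right, MulDistribMulAction.toMulAut_apply,
        MulDistribMulAction.toMulEquiv_apply, smul_mul', hf x.right y.right]
      ac_rfl
    · rfl

theorem inl_inv_mul_mul_inl (c : N) (x : N ⋊[MulDistribMulAction.toMulAut G N] G) :
    inl c⁻¹ * x * (inl c⁻¹)⁻¹ = ⟨x.right • c / c * x.left, x.right⟩ := by
  ext <;> simp [div_eq_mul_inv, mul_comm, mul_left_comm]

variable {f : G → N} (hf : IsMulCocycle₁ f)

theorem isConj_twist (hloc : ∀ g, ∃ c : N, g • c / c = f g)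
    (x : N ⋊[MulDistribMulAction.toMulAut G N] G) : IsConj (twist f hf x) x := by
  obtain ⟨c, hc⟩ := hloc x.right
  refine (isConj_iff.mpr ⟨inl c⁻¹, ?_⟩).symm
  rw [inl_inv_mul_mul_inl, hc]
  rfl

theorem isMulCoboundary₁_of_twist_eq_conj [FaithfulSMul G N]
    {a : N ⋊[MulDistribMulAction.toMulAut G N] G} (ha : ∀ x, twist f hf x = a * x * a⁻¹) :
    IsMulCoboundary₁ f := by
  have hright : a.right = 1 := by
    refine eq_of_smul_eq_smul (α := N) fun n => ?_
    simpa [twist, map_one_of_isMulCocycle₁ hf] using (congrArg left (ha (inl n))).symm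
  refine ⟨a.left⁻¹, fun g => ?_⟩
  have := congrArg left (ha (inr g))
  rw [← inl_left_mul_inr_right a, hright, map_one, mul_one] at this
  simpa [twist, div_eq_mul_inv, mul_comm] using this.symm

end SemidirectProduct

section UnitsAction

variable {R : Type*} [Ring R]

instance Units.mulDistribMulActionMultiplicative : MulDistribMulAction Rˣ (Multiplicative R) where
  smul u x := .ofAdd (u * x.toAdd)
  one_smul x := one_mul x.toAdd
  mul_smul u v x := mul_assoc (u : R) v x.toAdd
  smul_mul u x y := mul_add (u : R) x.toAdd y.toAdd
  smul_one u := mul_zero (u : R)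

@[simp]
theorem Units.toAdd_smul_multiplicative (u : Rˣ) (x : Multiplicative R) :
    (u • x).toAdd = u * x.toAdd :=
  rfl

instance Units.faithfulSMulMultiplicative : FaithfulSMul Rˣ (Multiplicative R) :=
  ⟨fun h => Units.ext (by simpa using congrArg Multiplicative.toAdd (h (.ofAdd 1)))⟩

end UnitsAction

abbrev ZMod.Holomorph (n : ℕ) : Type :=
  Multiplicative (ZMod n) ⋊[MulDistribMulAction.toMulAut (ZMod n)ˣ (Multiplicative (ZMod n))]
    (ZMod n)ˣ

theorem ZMod.card_holomorph (n : ℕ) [NeZero n] : Nat.card (ZMod.Holomorph n) = n * n.totient := by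
  rw [SemidirectProduct.card, Nat.card_eq_fintype_card, Nat.card_eq_fintype_card,
    ZMod.card_units_eq_totient]
  simp

-- `χ₈'` is the character of `(ZMod 8)ˣ` with kernel `{1, 3}`.
def wallCocycle (u : (ZMod 8)ˣ) : Multiplicative (ZMod 8) :=
  .ofAdd (if ZMod.χ₈' u = 1 then 0 else 4)

theorem isMulCocycle₁_wallCocycle : IsMulCocycle₁ wallCocycle := by
  unfold IsMulCocycle₁
  decide

theorem exists_smul_div_self_eq_wallCocycle (u : (ZMod 8)ˣ) :
    ∃ c : Multiplicative (ZMod 8), u • c / c = wallCocycle u := by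
  revert u
  decide

theorem not_isMulCoboundary₁_wallCocycle : ¬ IsMulCoboundary₁ wallCocycle := by
  unfold IsMulCoboundary₁
  decide

/-- There exists a group of order 32 with a locally inner (class-preserving) automorphism
that is not inner (Wall). -/
theorem exists_group_order_32_not_sha_rigid :
    ∃ G : GrpCat, Nat.card G = 32 ∧
      ∃ φ : G ≃* G, (∀ x : G, IsConj (φ x) x) ∧
        ¬ ∃ a : G, ∀ x : G, φ x = a * x * a⁻¹ := by
  have hcard : Nat.card (ULift (ZMod.Holomorph 8)) = 32 := by
    rw [Nat.card_ulift, ZMod.card_holomorph]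
    rfl
  obtain ⟨ψ, hconj, hinner⟩ := MulEquiv.ulift.symm.exists_classPreserving_not_inner
    (SemidirectProduct.isConj_twist isMulCocycle₁_wallCocycle exists_smul_div_self_eq_wallCocycle)
    fun ⟨_, ha⟩ => not_isMulCoboundary₁_wallCocycle
      (SemidirectProduct.isMulCoboundary₁_of_twist_eq_conj isMulCocycle₁_wallCocycle ha)
  exact ⟨GrpCat.of (ULift (ZMod.Holomorph 8)), hcard, ψ, hconj, hinner⟩
end
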